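/- Let σ ≥ 2 and let T be a nonempty string over the alphabet [0..σ). Set k = ⌈log₂ σ⌉, T' = ebin_k(T), Δ = |T'| − |T|, and δ = 2k + 3. Then for every i ∈ [1..|T|], it holds SA_T[i] = (SA_{T'}[Δ + i] − 1)/δ + 1. -/

import Mathlib

/-- Strict lexicographic order on strings: `U ≺ V` iff `U` is a proper prefix of `V`,
or `U` and `V` first differ at a position where `U` has the smaller symbol. -/
def LexLt {α : Type*} [LT α] (U V : List α) : Prop := List.Lex (· < ·) U V

/-- Non-strict lexicographic order on strings. -/
def LexLe {α : Type*} [LT α] (U V : List α) : Prop := LexLt U V ∨ U = V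

/-- The suffix `T[j..|T|]` of `T` (1-based index `j`). -/
def Suf {α : Type*} (T : List α) (j : ℕ) : List α := T.drop (j - 1)

/-- `Occ P T` is the set of starting positions (1-based) of occurrences of `P` in `T`. -/
def Occ {α : Type*} (P T : List α) : Set ℕ :=
  { j | 1 ≤ j ∧ j + P.length ≤ T.length + 1 ∧ (Suf T j).take P.length = P }

/-- `RangeBeg P T` = number of suffixes of `T` lexicographically smaller than `P`. -/
noncomputable def RangeBeg {α : Type*} [LT α] (P T : List α) : ℕ :=
  { j | 1 ≤ j ∧ j ≤ T.length ∧ LexLt (Suf T j) P }.ncard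

/-- `RangeEnd P T = RangeBeg P T + |Occ P T|`. -/
noncomputable def RangeEnd {α : Type*} [LT α] (P T : List α) : ℕ :=
  RangeBeg P T + (Occ P T).ncard

/-- `LexRange P₁ P₂ T` = positions `j ∈ [1..|T|]` with `P₁ ⪯ T[j..|T|] ≺ P₂`. -/
def LexRange {α : Type*} [LT α] (P₁ P₂ T : List α) : Set ℕ :=
  { j | 1 ≤ j ∧ j ≤ T.length ∧ LexLe P₁ (Suf T j) ∧ LexLt (Suf T j) P₂ }

/-- `sa` is the suffix array of `T` (1-based): a permutation of `[1..|T|]` listing the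
starting positions of the suffixes of `T` in increasing lexicographic order. -/
def IsSuffixArray {α : Type*} [LT α] (T : List α) (sa : ℕ → ℕ) : Prop :=
  (∀ i, 1 ≤ i → i ≤ T.length → 1 ≤ sa i ∧ sa i ≤ T.length) ∧
  (∀ j, 1 ≤ j → j ≤ T.length → ∃ i, 1 ≤ i ∧ i ≤ T.length ∧ sa i = j) ∧
  (∀ i j, 1 ≤ i → i < j → j ≤ T.length → LexLt (Suf T (sa i)) (Suf T (sa j)))

/-- `binSym k x` : the length-`k` binary representation of `x` (MSB first, leading zeros). -/
def binSym (k x : ℕ) : List ℕ := (List.range k).map fun i => x / 2 ^ (k - 1 - i) % 2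

/-- `binStr k S` = `bin_k(S[1]) · bin_k(S[2]) · … · bin_k(S[|S|])`. -/
def binStr (k : ℕ) (S : List ℕ) : List ℕ := (S.map (binSym k)).flatten

/-- `ebinSym k x = 1^{k+1} · 0 · bin_k(x) · 0`. -/
def ebinSym (k x : ℕ) : List ℕ := List.replicate (k + 1) 1 ++ [0] ++ binSym k x ++ [0]

/-- `ebinStr k S` = concatenation of `ebin_k(S[i])` for `i = 1, …, |S|`. -/
def ebinStr (k : ℕ) (S : List ℕ) : List ℕ := (S.map (ebinSym k)).flatten

/-- `sEnc k i` : length-`k` base-2 representation of `i` with `0 ↦ 2` and `1 ↦ 3`. -/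
def sEnc (k i : ℕ) : List ℕ := (binSym k i).map (· + 2)

/-- `SeqToString m W = ⊙_{i=1}^{m} rev(W[i]) · 4 · s(i-1)` with `k = 1 + ⌊log₂ m⌋`. -/
def SeqToString (m : ℕ) (W : ℕ → List ℕ) : List ℕ :=
  ((List.range m).map
    fun i => (W (i + 1)).reverse ++ [4] ++ sEnc (1 + Nat.log 2 m) i).flatten

/-- `PermSeqToString m π W = ⊙_{i=1}^{m} rev(W[π[i]]) · 4 · s(π[i]-1)`. -/
def PermSeqToString (m : ℕ) (perm : ℕ → ℕ) (W : ℕ → List ℕ) : List ℕ :=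
  ((List.range m).map
    fun i => (W (perm (i + 1))).reverse ++ [4]
      ++ sEnc (1 + Nat.log 2 m) (perm (i + 1) - 1)).flatten

/-- `PrefixRank W j X = |{ i ∈ [1..j] : X is a prefix of W[i] }|`. -/
noncomputable def PrefixRank {α : Type*} (W : ℕ → List α) (j : ℕ) (X : List α) : ℕ :=
  { i | 1 ≤ i ∧ i ≤ j ∧ X <+: W i }.ncard

/-- `p` is the `r`-th smallest element of the set `A ⊆ ℕ`. -/
def IsKthSmallest (A : Set ℕ) (r p : ℕ) : Prop :=
  p ∈ A ∧ (A ∩ Set.Iic p).ncard = r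

/-- Ceiling division `⌈a / b⌉` of positive naturals. -/
def cdiv (a b : ℕ) : ℕ := (a + b - 1) / b

/-- Alphabet inversion: `inv_σ(S)[i] = σ - 1 - S[i]`. -/
def invStr (σ : ℕ) (S : List ℕ) : List ℕ := S.map fun a => σ - 1 - a

/-- `p` is a period of `S`: `1 ≤ p ≤ |S|` and `S[i] = S[i+p]` for all `i ∈ [1..|S|-p]`. -/
def IsPeriod {α : Type*} (S : List α) (p : ℕ) : Prop :=
  1 ≤ p ∧ p ≤ S.length ∧ S.drop p <+: S

/-- `per S`: the smallest period of `S`. -/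
noncomputable def per {α : Type*} (S : List α) : ℕ := sInf { p | IsPeriod S p }

/-- `P` is `τ`-periodic: `|P| ≥ 3τ - 1` and `per(P[1..3τ-1]) ≤ τ/3`. -/
noncomputable def TauPeriodic {α : Type*} (τ : ℕ) (P : List α) : Prop :=
  3 * τ ≤ P.length + 1 ∧ 3 * per (P.take (3 * τ - 1)) ≤ τ

/-- `R(τ,T) = { i ∈ [1..n-3τ+2] : per(T[i..i+3τ-2]) ≤ τ/3 }`. -/
noncomputable def Rset {α : Type*} (τ : ℕ) (T : List α) : Set ℕ :=
  { i | 1 ≤ i ∧ i + 3 * τ ≤ T.length + 2 ∧ 3 * per ((Suf T i).take (3 * τ - 1)) ≤ τ }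

/-- `S` is a `τ`-synchronizing set of `T` (consistency and density conditions). -/
noncomputable def IsSyncSet {α : Type*} (τ : ℕ) (T : List α) (S : Set ℕ) : Prop :=
  (∀ j ∈ S, 1 ≤ j ∧ j + 2 * τ ≤ T.length + 1) ∧
  (∀ i j, 1 ≤ i → i + 2 * τ ≤ T.length + 1 → 1 ≤ j → j + 2 * τ ≤ T.length + 1 →
    (Suf T i).take (2 * τ) = (Suf T j).take (2 * τ) → (i ∈ S ↔ j ∈ S)) ∧
  (∀ i, 1 ≤ i → i + 3 * τ ≤ T.length + 2 → (S ∩ Set.Ico i (i + τ) = ∅ ↔ i ∈ Rset τ T))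

/-- `succ_S(x) = min { x' ∈ S : x' ≥ x }`. -/
noncomputable def succS (S : Set ℕ) (x : ℕ) : ℕ := sInf (S ∩ Set.Ici x)

/-- `DistPrefixes(τ,T,S) = { T[j..succ_S(j)+2τ) : j ∈ [1..n-3τ+2] \ R(τ,T) }`. -/
noncomputable def DistPrefixes {α : Type*} (τ : ℕ) (T : List α) (S : Set ℕ) : Set (List α) :=
  (fun j => (Suf T j).take (succS S j + 2 * τ - j)) ''
    { j | 1 ≤ j ∧ j + 3 * τ ≤ T.length + 2 ∧ j ∉ Rset τ T }

/-- `r` is the value of the prefix RMQ: the smallest index `i ∈ (b..e]` with `X` a prefix of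
`W[i]` minimizing `A[i]` (ties broken towards the smaller index). -/
def IsPrefixRMQ (A : ℕ → ℤ) (W : ℕ → List ℕ) (b e : ℕ) (X : List ℕ) (r : ℕ) : Prop :=
  (b < r ∧ r ≤ e ∧ X <+: W r) ∧
  (∀ i, b < i → i ≤ e → X <+: W i → A r ≤ A i) ∧
  (∀ i, b < i → i ≤ e → X <+: W i → A i = A r → r ≤ i)


section StmtAux

lemma binSym_length (k x : ℕ) : (binSym k x).length = k := by simp [binSym]

lemma binSym_mem_le {k x y : ℕ} (h : y ∈ binSym k x) : y ≤ 1 := by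
  simp [binSym] at h
  obtain ⟨i, _, rfl⟩ := h
  omega

lemma ebinSym_length (k x : ℕ) : (ebinSym k x).length = 2 * k + 3 := by
  simp [ebinSym, binSym_length]; ring

lemma ebinStr_cons (k x : ℕ) (S : List ℕ) :
    ebinStr k (x :: S) = ebinSym k x ++ ebinStr k S := by simp [ebinStr]

lemma ebinStr_length (k : ℕ) (S : List ℕ) :
    (ebinStr k S).length = (2 * k + 3) * S.length := by
  induction S with
  | nil => simp [ebinStr]
  | cons x S ih => rw [ebinStr_cons]; simp [ih, ebinSym_length]; ring

lemma ebinStr_drop (k : ℕ) : ∀ (p : ℕ) (S : List ℕ),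
    (ebinStr k S).drop ((2 * k + 3) * p) = ebinStr k (S.drop p) := by
  intro p
  induction p with
  | zero => simp
  | succ p ih =>
    intro S
    cases S with
    | nil => simp [ebinStr]
    | cons x S =>
      rw [ebinStr_cons, List.drop_append]
      have h1 : (2*k+3) * (p+1) - (ebinSym k x).length = (2*k+3) * p := by
        rw [ebinSym_length]; ring_nf; omega
      have h2 : (ebinSym k x).drop ((2*k+3)*(p+1)) = [] := by
        apply List.drop_eq_nil_of_le; rw [ebinSym_length]; nlinarith
      rw [h1, h2, ih]; simp

lemma lex_nil_of_ne_nil {α : Type*} {r : α → α → Prop} {L : List α} (h : L ≠ []) :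
    List.Lex r [] L := by
  cases L with
  | nil => exact absurd rfl h
  | cons a l => exact List.Lex.nil

lemma lex_append_of_length_le {α : Type*} {r : α → α → Prop} :
    ∀ {X Y : List α}, List.Lex r X Y → ∀ (A B : List α), Y.length ≤ X.length →
      List.Lex r (X ++ A) (Y ++ B) := by
  intro X Y h
  induction h with
  | nil => intro A B h; simp at h
  | @cons a l₁ l₂ h ih =>
    intro A B hlen
    exact List.Lex.cons (ih A B (by simpa using hlen))
  | rel h => intro A B _; exact List.Lex.rel h

lemma digit_mod {k m : ℕ} (x : ℕ) (h : m < k) : x / 2 ^ m % 2 = x % 2 ^ k / 2 ^ m % 2 := by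
  set q := x / 2 ^ k with hq
  set r := x % 2 ^ k with hrq
  have hx : x = 2 ^ k * q + r := (Nat.div_add_mod x (2 ^ k)).symm
  have e : (2:ℕ) ^ k = 2 ^ m * 2 * 2 ^ (k - m - 1) := by
    have h2 : (2:ℕ) ^ m * 2 = 2 ^ (m + 1) := (pow_succ 2 m).symm
    rw [h2, ← pow_add]
    congr 1
    omega
  conv_lhs => rw [hx, e]
  have e2 : 2 ^ m * 2 * 2 ^ (k - m - 1) * q + r
      = 2 ^ m * (2 * (2 ^ (k - m - 1) * q)) + r := by ring
  rw [e2, Nat.mul_add_div (by positivity), Nat.mul_add_mod]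

lemma binSym_succ (k x : ℕ) :
    binSym (k + 1) x = (x / 2 ^ k % 2) :: binSym k (x % 2 ^ k) := by
  unfold binSym
  rw [List.range_succ_eq_map]
  simp only [List.map_cons, List.map_map]
  congr 1
  apply List.map_congr_left
  intro i hi
  simp only [List.mem_range] at hi
  simp only [Function.comp_apply, Nat.succ_eq_add_one]
  have h1 : k + 1 - 1 - (i + 1) = k - 1 - i := by omega
  rw [h1]
  exact digit_mod x (by omega)

lemma binSym_lex : ∀ k a b, a < b → b < 2 ^ k →
    List.Lex (· < ·) (binSym k a) (binSym k b) := by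
  intro k
  induction k with
  | zero => intro a b hab hb; simp at hb; omega
  | succ k ih =>
    intro a b hab hb
    rw [binSym_succ, binSym_succ]
    have ha2 : a / 2 ^ k ≤ b / 2 ^ k := Nat.div_le_div_right hab.le
    have hb2 : b / 2 ^ k < 2 := by
      apply Nat.div_lt_of_lt_mul
      calc b < 2 ^ (k + 1) := hb
        _ = 2 ^ k * 2 := by rw [pow_succ]
    have ha2' : a / 2 ^ k < 2 := lt_of_le_of_lt ha2 hb2
    rcases lt_or_eq_of_le ha2 with h | h
    · exact List.Lex.rel (by rw [Nat.mod_eq_of_lt ha2', Nat.mod_eq_of_lt hb2]; exact h)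
    · rw [h]
      apply List.Lex.cons
      apply ih
      · have h3 := Nat.div_add_mod a (2 ^ k)
        have h4 := Nat.div_add_mod b (2 ^ k)
        have h5 : 2 ^ k * (a / 2 ^ k) = 2 ^ k * (b / 2 ^ k) := by rw [h]
        omega
      · exact Nat.mod_lt b (by positivity)

lemma ebinSym_lex {k a b : ℕ} (hab : a < b) (hb : b < 2 ^ k) :
    List.Lex (· < ·) (ebinSym k a) (ebinSym k b) := by
  unfold ebinSym
  rw [List.append_assoc, List.append_assoc, List.append_assoc, List.append_assoc]
  apply List.Lex.append_left
  apply List.Lex.append_left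
  exact lex_append_of_length_le (binSym_lex k a b hab hb) _ _
    (by rw [binSym_length, binSym_length])

lemma ebinStr_lex {k : ℕ} : ∀ {U V : List ℕ}, List.Lex (· < ·) U V →
    (∀ a ∈ V, a < 2 ^ k) → List.Lex (· < ·) (ebinStr k U) (ebinStr k V) := by
  intro U V h
  induction h with
  | @nil a l =>
    intro _
    apply lex_nil_of_ne_nil
    intro hcon
    have := congrArg List.length hcon
    rw [ebinStr_cons] at this
    simp [ebinSym_length] at this
  | @cons a l₁ l₂ h ih =>
    intro hV
    rw [ebinStr_cons, ebinStr_cons]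
    exact List.Lex.append_left _ (ih fun x hx => hV x (List.mem_cons_of_mem _ hx)) _
  | @rel a l₁ b l₂ hr =>
    intro hV
    rw [ebinStr_cons, ebinStr_cons]
    exact lex_append_of_length_le (ebinSym_lex hr (hV b List.mem_cons_self)) _ _
      (by rw [ebinSym_length, ebinSym_length])

lemma leading_ones_lex : ∀ (a b : ℕ), a < b → ∀ (r s : List ℕ),
    List.Lex (· < ·) (List.replicate a 1 ++ 0 :: r) (List.replicate b 1 ++ s) := by
  intro a
  induction a with
  | zero =>
    intro b hb r s
    obtain ⟨b', rfl⟩ : ∃ b', b = b' + 1 := ⟨b - 1, by omega⟩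
    rw [List.replicate_succ, List.cons_append]
    exact List.Lex.rel (by norm_num)
  | succ a ih =>
    intro b hb r s
    obtain ⟨b', rfl⟩ : ∃ b', b = b' + 1 := ⟨b - 1, by omega⟩
    rw [List.replicate_succ, List.replicate_succ, List.cons_append, List.cons_append]
    exact List.Lex.cons (ih b' (by omega) r s)

lemma exists_rep : ∀ (M : List ℕ), (∀ y ∈ M, y ≤ 1) → ∀ (L : List ℕ),
    ∃ a r, a ≤ M.length ∧ M ++ 0 :: L = List.replicate a 1 ++ 0 :: r := by
  intro M
  induction M with
  | nil => intro _ L; exact ⟨0, L, by simp⟩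
  | cons y M ih =>
    intro h L
    have hy : y ≤ 1 := h y List.mem_cons_self
    interval_cases y
    · exact ⟨0, M ++ 0 :: L, by simp⟩
    · obtain ⟨a, r, ha, he⟩ := ih (fun z hz => h z (List.mem_cons_of_mem _ hz)) L
      refine ⟨a + 1, r, by simp; omega, ?_⟩
      simp only [List.replicate_succ, List.cons_append, he]

lemma ebinSym_append_eq (k x : ℕ) (L : List ℕ) :
    ebinSym k x ++ L = List.replicate (k + 1) 1 ++ (0 :: (binSym k x ++ 0 :: L)) := by
  simp [ebinSym]

lemma nonboundary_shape (k x : ℕ) (L : List ℕ) {t : ℕ} (h1 : 1 ≤ t) (h2 : t ≤ 2 * k + 2) :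
    ∃ a r, a ≤ k ∧ (ebinSym k x ++ L).drop t = List.replicate a 1 ++ 0 :: r := by
  rw [ebinSym_append_eq, List.drop_append, List.drop_replicate]
  simp only [List.length_replicate]
  rcases le_or_gt t (k + 1) with h | h
  · have h3 : t - (k + 1) = 0 := by omega
    rw [h3, List.drop_zero]
    exact ⟨k + 1 - t, binSym k x ++ 0 :: L, by omega, rfl⟩
  · have h3 : k + 1 - t = 0 := by omega
    obtain ⟨u, hu⟩ : ∃ u, t - (k + 1) = u + 1 := ⟨t - k - 2, by omega⟩
    rw [h3, hu]
    simp only [List.replicate_zero, List.nil_append, List.drop_succ_cons]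
    rw [List.drop_append]
    have h4 : u - (binSym k x).length = 0 := by rw [binSym_length]; omega
    rw [h4, List.drop_zero]
    obtain ⟨a, r, ha, he⟩ := exists_rep ((binSym k x).drop u)
      (fun y hy => binSym_mem_le (List.mem_of_mem_drop hy)) L
    refine ⟨a, r, ?_, he⟩
    calc a ≤ ((binSym k x).drop u).length := ha
      _ ≤ (binSym k x).length := by simp
      _ = k := binSym_length k x

lemma boundary_shape (k : ℕ) (T : List ℕ) {p : ℕ} (hp : p < T.length) :
    ∃ r, (ebinStr k T).drop ((2 * k + 3) * p) = List.replicate (k + 1) 1 ++ (0 :: r) := by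
  rw [ebinStr_drop, List.drop_eq_getElem_cons hp, ebinStr_cons, ebinSym_append_eq]
  exact ⟨_, rfl⟩

lemma nonbnd_lt_bnd (k : ℕ) (T : List ℕ) {m p : ℕ} (hm : m < (2 * k + 3) * T.length)
    (hnd : ¬ (2 * k + 3) ∣ m) (hp : p < T.length) :
    List.Lex (· < ·) ((ebinStr k T).drop m) ((ebinStr k T).drop ((2 * k + 3) * p)) := by
  obtain ⟨r', hb⟩ := boundary_shape k T hp
  have hq : m / (2 * k + 3) < T.length := by
    apply Nat.div_lt_of_lt_mul
    omega
  have hts : 1 ≤ m % (2 * k + 3) ∧ m % (2 * k + 3) ≤ 2 * k + 2 := by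
    have := Nat.mod_lt m (show 0 < 2 * k + 3 by omega)
    rcases Nat.eq_zero_or_pos (m % (2 * k + 3)) with h | h
    · exact absurd (Nat.dvd_of_mod_eq_zero h) hnd
    · omega
  have hsplit : (ebinStr k T).drop m
      = ((ebinSym k T[m / (2*k+3)] ++ ebinStr k (T.drop (m / (2*k+3) + 1))).drop (m % (2*k+3))) := by
    conv_lhs => rw [← Nat.div_add_mod m (2*k+3), ← List.drop_drop]
    rw [ebinStr_drop, List.drop_eq_getElem_cons hq, ebinStr_cons]
  obtain ⟨a, r, ha, he⟩ := nonboundary_shape k T[m / (2*k+3)]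
    (ebinStr k (T.drop (m / (2*k+3) + 1))) hts.1 hts.2
  rw [hsplit, he, hb]
  exact leading_ones_lex a (k + 1) (by omega) r _

lemma lex_asymm' {l₁ l₂ : List ℕ} (h : List.Lex (· < ·) l₁ l₂) :
    ¬ List.Lex (· < ·) l₂ l₁ := asymm h

lemma lex_irrefl' (l : List ℕ) : ¬ List.Lex (· < ·) l l :=
  fun h => lex_asymm' h h

lemma sa_unique {T : List ℕ} {sa sb : ℕ → ℕ}
    (hsa : IsSuffixArray T sa) (hsb : IsSuffixArray T sb) :
    ∀ i, 1 ≤ i → i ≤ T.length → sa i = sb i := by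
  intro i
  induction i using Nat.strong_induction_on with
  | _ i ih =>
    intro h1 h2
    obtain ⟨hb1, hb2⟩ := hsb.1 i h1 h2
    obtain ⟨m, hm1, hm2, hm3⟩ := hsa.2.1 (sb i) hb1 hb2
    obtain ⟨ha1, ha2⟩ := hsa.1 i h1 h2
    obtain ⟨m', hm'1, hm'2, hm'3⟩ := hsb.2.1 (sa i) ha1 ha2
    rcases lt_trichotomy m i with h | h | h
    · exfalso
      have e1 : sa m = sb m := ih m h hm1 (by omega)
      have : LexLt (Suf T (sb m)) (Suf T (sb i)) := hsb.2.2 m i hm1 h h2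
      rw [e1] at hm3
      rw [hm3] at this
      exact lex_irrefl' _ this
    · rw [← h, hm3]; rw [h]
    · rcases lt_trichotomy m' i with h' | h' | h'
      · exfalso
        have e1 : sa m' = sb m' := ih m' h' hm'1 (by omega)
        have : LexLt (Suf T (sa m')) (Suf T (sa i)) := hsa.2.2 m' i hm'1 h' h2
        rw [e1, hm'3] at this
        exact lex_irrefl' _ this
      · rw [← hm'3, h']
      · exfalso
        have l1 : LexLt (Suf T (sa i)) (Suf T (sa m)) := hsa.2.2 i m h1 h hm2
        have l2 : LexLt (Suf T (sb i)) (Suf T (sb m')) := hsb.2.2 i m' h1 h' hm'2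
        rw [hm3] at l1
        rw [hm'3] at l2
        exact lex_asymm' l1 l2

lemma top_block {N n Δ : ℕ} (sa' : ℕ → ℕ) (P : ℕ → Prop) [DecidablePred P]
    (hN : Δ + n = N)
    (hrange : ∀ i, 1 ≤ i → i ≤ N → 1 ≤ sa' i ∧ sa' i ≤ N)
    (hsurj : ∀ j, 1 ≤ j → j ≤ N → ∃ i, 1 ≤ i ∧ i ≤ N ∧ sa' i = j)
    (hinj : ∀ i j, 1 ≤ i → i ≤ N → 1 ≤ j → j ≤ N → i ≠ j → sa' i ≠ sa' j)
    (hcard : ((Finset.Icc 1 N).filter (fun q => P q)).card = n)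
    (hlt : ∀ i j, 1 ≤ i → i ≤ N → 1 ≤ j → j ≤ N → ¬ P (sa' i) → P (sa' j) → i < j) :
    (∀ i, Δ + 1 ≤ i → i ≤ N → P (sa' i)) ∧ (∀ i, 1 ≤ i → i ≤ Δ → ¬ P (sa' i)) := by
  classical
  set J : Finset ℕ := (Finset.Icc 1 N).filter (fun i => P (sa' i)) with hJ
  set B : Finset ℕ := (Finset.Icc 1 N).filter (fun q => P q) with hB
  have hJcard : J.card = B.card := by
    apply Finset.card_bij (fun i _ => sa' i)
    · intro i hi
      simp only [hJ, hB, Finset.mem_filter, Finset.mem_Icc] at hi ⊢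
      exact ⟨⟨(hrange i hi.1.1 hi.1.2).1, (hrange i hi.1.1 hi.1.2).2⟩, hi.2⟩
    · intro i hi j hj hij
      simp only [hJ, Finset.mem_filter, Finset.mem_Icc] at hi hj
      by_contra hne
      exact hinj i j hi.1.1 hi.1.2 hj.1.1 hj.1.2 hne hij
    · intro b hb
      simp only [hB, Finset.mem_filter, Finset.mem_Icc] at hb
      obtain ⟨i, hi1, hi2, hi3⟩ := hsurj b hb.1.1 hb.1.2
      refine ⟨i, ?_, hi3⟩
      simp only [hJ, Finset.mem_filter, Finset.mem_Icc]
      exact ⟨⟨hi1, hi2⟩, by rw [hi3]; exact hb.2⟩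
  have hJn : J.card = n := by rw [hJcard, ← hcard]
  have hCcard : ((Finset.Icc 1 N).filter (fun i => ¬ P (sa' i))).card = Δ := by
    have := Finset.card_filter_add_card_filter_not
      (s := Finset.Icc 1 N) (p := fun i => P (sa' i))
    rw [← hJ] at this
    rw [Nat.card_Icc] at this
    omega
  have hJsub : J ⊆ Finset.Icc (Δ + 1) N := by
    intro i hi
    simp only [hJ, Finset.mem_filter, Finset.mem_Icc] at hi
    have hsubC : ((Finset.Icc 1 N).filter (fun j => ¬ P (sa' j))) ⊆ Finset.Ico 1 i := by
      intro c hc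
      simp only [Finset.mem_filter, Finset.mem_Icc] at hc
      simp only [Finset.mem_Ico]
      exact ⟨hc.1.1, hlt c i hc.1.1 hc.1.2 hi.1.1 hi.1.2 hc.2 hi.2⟩
    have := Finset.card_le_card hsubC
    rw [hCcard, Nat.card_Ico] at this
    simp only [Finset.mem_Icc]
    omega
  have hJeq : J = Finset.Icc (Δ + 1) N := by
    apply Finset.eq_of_subset_of_card_le hJsub
    rw [hJn, Nat.card_Icc]
    omega
  constructor
  · intro i hi1 hi2
    have : i ∈ J := by rw [hJeq]; simp only [Finset.mem_Icc]; exact ⟨hi1, hi2⟩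
    simp only [hJ, Finset.mem_filter] at this
    exact this.2
  · intro i hi1 hi2
    intro hP
    have : i ∈ J := by
      simp only [hJ, Finset.mem_filter, Finset.mem_Icc]
      exact ⟨⟨hi1, by omega⟩, hP⟩
    rw [hJeq] at this
    simp only [Finset.mem_Icc] at this
    omega

lemma bcard {δ n N : ℕ} (hδ : 0 < δ) (hN : N = δ * n) :
    ((Finset.Icc 1 N).filter (fun q => δ ∣ q - 1)).card = n := by
  have heq : (Finset.Icc 1 N).filter (fun q => δ ∣ q - 1)
      = (Finset.range n).image (fun p => δ * p + 1) := by
    ext q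
    simp only [Finset.mem_filter, Finset.mem_Icc, Finset.mem_image, Finset.mem_range]
    constructor
    · rintro ⟨⟨h1, h2⟩, ⟨p, hp⟩⟩
      refine ⟨p, ?_, by omega⟩
      by_contra hc
      push_neg at hc
      have := Nat.mul_le_mul_left δ hc
      omega
    · rintro ⟨p, hp, rfl⟩
      have h1 : δ * (p + 1) ≤ δ * n := Nat.mul_le_mul_left δ (by omega)
      have h2 : δ * (p + 1) = δ * p + δ := by ring
      exact ⟨⟨by omega, by omega⟩, ⟨p, by omega⟩⟩
  rw [heq, Finset.card_image_of_injective _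
    (fun a b hab => Nat.eq_of_mul_eq_mul_left hδ (by omega)), Finset.card_range]

end StmtAux

theorem stmt5 (σ : ℕ) (hσ : 2 ≤ σ) (T : List ℕ) (hT : T ≠ [])
    (hTa : ∀ a ∈ T, a < σ) (sa sa' : ℕ → ℕ)
    (hsa : IsSuffixArray T sa)
    (hsa' : IsSuffixArray (ebinStr (Nat.clog 2 σ) T) sa') :
    ∀ i, 1 ≤ i → i ≤ T.length →
      (sa i : ℚ) =
        ((sa' ((ebinStr (Nat.clog 2 σ) T).length - T.length + i) : ℚ) - 1) /
          ((2 * Nat.clog 2 σ + 3 : ℕ) : ℚ) + 1 := by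
  intro i hi1 hi2
  set k := Nat.clog 2 σ with hk
  have hk1 : 1 ≤ k := Nat.clog_pos (by norm_num) hσ
  have hpow : σ ≤ 2 ^ k := Nat.le_pow_clog (by norm_num) σ
  set n := T.length with hn
  have hn1 : 1 ≤ n := List.length_pos_iff.mpr hT
  set δ := 2 * k + 3 with hδdef
  have hδ : 0 < δ := by omega
  set T' := ebinStr k T with hT'
  have hNval : T'.length = δ * n := ebinStr_length k T
  set N := T'.length with hNdef
  set Δ := N - n with hΔ
  have hΔn : Δ + n = N := by
    have h1 : n ≤ δ * n := Nat.le_mul_of_pos_left n hδ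
    omega
  obtain ⟨hr', hs', ho'⟩ := hsa'
  -- injectivity of sa' on [1..N]
  have hinj : ∀ i j, 1 ≤ i → i ≤ N → 1 ≤ j → j ≤ N → i ≠ j → sa' i ≠ sa' j := by
    intro a b ha1 ha2 hb1 hb2 hne heq
    rcases lt_trichotomy a b with h | h | h
    · have := ho' a b ha1 h hb2
      rw [heq] at this
      exact lex_irrefl' _ this
    · exact hne h
    · have := ho' b a hb1 h ha2
      rw [heq] at this
      exact lex_irrefl' _ this
  -- boundary suffixes occupy the top block
  have hTB := top_block (N := N) (n := n) (Δ := Δ) sa' (fun q => δ ∣ q - 1) hΔn hr' hs' hinj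
    (bcard hδ hNval)
    (by
      intro a b ha1 ha2 hb1 hb2 hPa hPb
      rcases lt_trichotomy a b with h | h | h
      · exact h
      · exact absurd (h ▸ hPb) hPa
      · exfalso
        obtain ⟨p, hp⟩ := hPb
        have hsb1 := hr' a ha1 ha2
        have hsb2 := hr' b hb1 hb2
        have hpn : p < n := by
          have h1 : δ * p < δ * n := by omega
          exact Nat.lt_of_mul_lt_mul_left h1
        have hm : sa' a - 1 < δ * n := by omega
        have hnd : ¬ δ ∣ (sa' a - 1) := hPa
        have hlex := nonbnd_lt_bnd k T hm hnd hpn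
        have hord := ho' b a hb1 h ha2
        have e1 : Suf T' (sa' a) = T'.drop (sa' a - 1) := rfl
        have e2 : Suf T' (sa' b) = T'.drop (δ * p) := by
          unfold Suf
          rw [hp]
        rw [e1, e2] at hord
        exact lex_asymm' hlex hord)
  obtain ⟨htop, hbot⟩ := hTB
  -- define candidate suffix array of T
  set sb : ℕ → ℕ := fun j => (sa' (Δ + j) - 1) / δ + 1 with hsbdef
  have hsb : IsSuffixArray T sb := by
    refine ⟨?_, ?_, ?_⟩
    · intro j h1 h2
      have hb := hr' (Δ + j) (by omega) (by omega)
      constructor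
      · exact Nat.succ_le_succ (Nat.zero_le _)
      · have : (sa' (Δ + j) - 1) / δ < n := by
          rw [Nat.div_lt_iff_lt_mul hδ]
          have : n * δ = δ * n := Nat.mul_comm n δ
          omega
        simp only [hsbdef]
        omega
    · intro j h1 h2
      have e2 : δ * (j - 1) + δ = δ * j := by rw [← Nat.mul_succ]; congr 1; omega
      have e3 : δ * j ≤ δ * n := Nat.mul_le_mul_left δ h2
      obtain ⟨i', hi1, hi2, hi3⟩ := hs' (δ * (j - 1) + 1) (by omega) (by omega)
      have hi4 : Δ + 1 ≤ i' := by
        by_contra hcon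
        push_neg at hcon
        exact hbot i' hi1 (by omega) (by rw [hi3]; exact ⟨j - 1, by omega⟩)
      refine ⟨i' - Δ, by omega, by omega, ?_⟩
      simp only [hsbdef]
      rw [show Δ + (i' - Δ) = i' by omega, hi3]
      rw [show δ * (j - 1) + 1 - 1 = δ * (j - 1) by omega, Nat.mul_div_cancel_left _ hδ]
      omega
    · intro a b ha1 hab hb2
      have hord := ho' (Δ + a) (Δ + b) (by omega) (by omega) (by omega)
      obtain ⟨p, hp⟩ := htop (Δ + a) (by omega) (by omega)
      obtain ⟨p', hp'⟩ := htop (Δ + b) (by omega) (by omega)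
      have hra := hr' (Δ + a) (by omega) (by omega)
      have hrb := hr' (Δ + b) (by omega) (by omega)
      have hpn : p < n := by
        have h1 : δ * p < δ * n := by omega
        exact Nat.lt_of_mul_lt_mul_left h1
      have hp'n : p' < n := by
        have h1 : δ * p' < δ * n := by omega
        exact Nat.lt_of_mul_lt_mul_left h1
      have hsba : sb a = p + 1 := by
        simp only [hsbdef]
        rw [hp, Nat.mul_div_cancel_left _ hδ]
      have hsbb : sb b = p' + 1 := by
        simp only [hsbdef]
        rw [hp', Nat.mul_div_cancel_left _ hδ]
      have ea : Suf T' (sa' (Δ + a)) = ebinStr k (T.drop p) := by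
        unfold Suf
        rw [hp, hT']
        exact ebinStr_drop k p T
      have eb : Suf T' (sa' (Δ + b)) = ebinStr k (T.drop p') := by
        unfold Suf
        rw [hp', hT']
        exact ebinStr_drop k p' T
      rw [ea, eb] at hord
      have goal_eq : Suf T (sb a) = T.drop p := by rw [hsba]; rfl
      have goal_eq' : Suf T (sb b) = T.drop p' := by rw [hsbb]; rfl
      show LexLt (Suf T (sb a)) (Suf T (sb b))
      rw [goal_eq, goal_eq']
      rcases trichotomous_of (List.Lex ((· < ·) : ℕ → ℕ → Prop)) (T.drop p) (T.drop p')
        with h | h | h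
      · exact h
      · exfalso
        have hlen := congrArg List.length h
        rw [List.length_drop, List.length_drop] at hlen
        have hpp : p = p' := by omega
        subst hpp
        have : sa' (Δ + a) = sa' (Δ + b) := by omega
        exact hinj (Δ + a) (Δ + b) (by omega) (by omega) (by omega) (by omega)
          (by omega) this
      · exfalso
        have hbound : ∀ x ∈ T.drop p, x < 2 ^ k :=
          fun x hx => lt_of_lt_of_le (hTa x (List.mem_of_mem_drop hx)) hpow
        exact lex_asymm' hord (ebinStr_lex h hbound)
  have hfinal := sa_unique hsa hsb i hi1 hi2
  obtain ⟨p, hp⟩ := htop (Δ + i) (by omega) (by omega)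
  have hri := hr' (Δ + i) (by omega) (by omega)
  have h1 : sa' (Δ + i) = δ * p + 1 := by omega
  have h2 : sa i = p + 1 := by
    rw [hfinal]
    simp only [hsbdef]
    rw [hp, Nat.mul_div_cancel_left _ hδ]
  rw [h2, h1]
  have hδQ : ((2 * k + 3 : ℕ) : ℚ) ≠ 0 := by positivity
  push_cast
  field_simp
  ring
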